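/- The domination polynomial of the Petersen graph P is D(P,x) = x^10 + C(10,9)x^9 + C(10,8)x^8 + C(10,7)x^7 + (C(10,6) − 10)x^6 + (C(10,5) − 60)x^5 + 75x^4 + 10x^3; equivalently, d(P,3)=10, d(P,4)=75, d(P,5)=192, d(P,6)=200, d(P,7)=120, d(P,8)=45, d(P,9)=10, d(P,10)=1, and d(P,i)=0 for i ≤ 2. -/

import Mathlib

/-- `S` is a dominating set of `G`: every vertex not in `S` is adjacent to some vertex of `S`. -/
def IsDomSet {V : Type*} (G : SimpleGraph V) (S : Finset V) : Prop :=
  ∀ v : V, v ∉ S → ∃ u ∈ S, G.Adj u v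

/-- `d(G,i)`: the number of dominating sets of `G` of cardinality `i`. -/
noncomputable def domCount {V : Type*} (G : SimpleGraph V) (i : ℕ) : ℕ :=
  {S : Finset V | IsDomSet G S ∧ S.card = i}.ncard

/-- `d_v(G,i)`: the number of dominating sets of `G` of cardinality `i` containing `v`. -/
noncomputable def domCountVert {V : Type*} (G : SimpleGraph V) (v : V) (i : ℕ) : ℕ :=
  {S : Finset V | IsDomSet G S ∧ S.card = i ∧ v ∈ S}.ncard

/-- The Petersen graph: vertices are the 2-element subsets of a 5-element set,
with two vertices adjacent iff the corresponding subsets are disjoint. -/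
def petersen : SimpleGraph {s : Finset (Fin 5) // s.card = 2} where
  Adj a b := Disjoint a.1 b.1
  symm := ⟨fun a b h => h.symm⟩
  loopless := ⟨fun a h => by
    have h' : Disjoint a.1 a.1 := h
    rw [disjoint_self] at h'
    have h2 := a.2
    rw [h'] at h2
    simp at h2⟩

/-!
A set fails to dominate exactly when it misses some closed neighbourhood `N[v]`. In the Petersen
graph each `N[v]` has 4 vertices and two distinct ones together have at least 6, so for `i ≥ 5` an
`i`-set misses at most one of them; the non-dominating `i`-sets are then counted as `10 * C(6, i)`.
For `i ≤ 2`, the closed neighbourhoods of `i` vertices cover at most `8 < 10` vertices. The two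
remaining coefficients `d(P,3)` and `d(P,4)` are found by enumeration.
-/

open Finset

namespace SimpleGraph

variable {V : Type*} [Fintype V] [DecidableEq V] (G : SimpleGraph V) [DecidableRel G.Adj]

def closedNeighborFinset (v : V) : Finset V := insert v (G.neighborFinset v)

theorem card_closedNeighborFinset (v : V) : #(G.closedNeighborFinset v) = G.degree v + 1 :=
  card_insert_of_notMem (G.notMem_neighborFinset_self v)

instance : DecidablePred (IsDomSet G) := fun S =>
  inferInstanceAs (Decidable (∀ v, v ∉ S → ∃ u ∈ S, G.Adj u v))

theorem not_isDomSet_iff {S : Finset V} :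
    ¬ IsDomSet G S ↔ ∃ v, S ⊆ (G.closedNeighborFinset v)ᶜ := by
  simp only [IsDomSet, not_forall, not_exists, not_and, subset_iff, mem_compl,
    closedNeighborFinset, mem_insert, mem_neighborFinset, not_or]
  constructor
  · rintro ⟨v, hv, hS⟩
    exact ⟨v, fun u hu => ⟨fun huv => hv (huv ▸ hu), fun hvu => hS u hu hvu.symm⟩⟩
  · rintro ⟨v, hS⟩
    exact ⟨v, fun hv => (hS hv).1 rfl, fun u hu huv => (hS hu).2 huv.symm⟩

theorem domCount_eq_card_filter (i : ℕ) :
    domCount G i = #((univ.powersetCard i).filter (IsDomSet G)) := by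
  rw [domCount, ← Set.ncard_coe_finset]
  congr 1
  ext S
  simp [and_comm]

theorem card_le_of_isDomSet {S : Finset V} (hS : IsDomSet G S) :
    Fintype.card V ≤ #S * (G.maxDegree + 1) := by
  have hcover : univ ⊆ S.biUnion G.closedNeighborFinset := by
    intro v _
    by_cases hv : v ∈ S
    · exact mem_biUnion.2 ⟨v, hv, mem_insert_self v _⟩
    · obtain ⟨u, hu, huv⟩ := hS v hv
      exact mem_biUnion.2 ⟨u, hu, mem_insert_of_mem ((G.mem_neighborFinset u v).2 huv)⟩
  calc Fintype.card V ≤ #(S.biUnion G.closedNeighborFinset) := card_le_card hcover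
    _ ≤ ∑ u ∈ S, #(G.closedNeighborFinset u) := card_biUnion_le
    _ ≤ ∑ _u ∈ S, (G.maxDegree + 1) := by
      gcongr with u
      rw [card_closedNeighborFinset]
      exact Nat.succ_le_succ (G.degree_le_maxDegree u)
    _ = #S * (G.maxDegree + 1) := by rw [sum_const, smul_eq_mul]

theorem domCount_eq_zero {i : ℕ} (hi : i * (G.maxDegree + 1) < Fintype.card V) :
    domCount G i = 0 := by
  rw [domCount_eq_card_filter, card_eq_zero, filter_eq_empty_iff]
  intro S hS hdom
  have := G.card_le_of_isDomSet hdom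
  rw [(mem_powersetCard.1 hS).2] at this
  omega

theorem domCount_eq_choose_sub {r i : ℕ} (hG : G.IsRegularOfDegree r)
    (hunion : ∀ v w, v ≠ w →
      Fintype.card V < i + #(G.closedNeighborFinset v ∪ G.closedNeighborFinset w)) :
    domCount G i =
      (Fintype.card V).choose i - Fintype.card V * (Fintype.card V - (r + 1)).choose i := by
  have hnon : (univ.powersetCard i).filter (fun S => ¬ IsDomSet G S) =
      univ.biUnion fun v => (G.closedNeighborFinset v)ᶜ.powersetCard i := by
    ext S
    simp [mem_powersetCard, not_isDomSet_iff, and_comm]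
  have hdisj : ((univ : Finset V) : Set V).PairwiseDisjoint
      fun v => (G.closedNeighborFinset v)ᶜ.powersetCard i := by
    intro v _ w _ hvw
    refine Finset.disjoint_left.2 fun S hSv hSw => ?_
    obtain ⟨hSv, hcard⟩ := mem_powersetCard.1 hSv
    have hsub : S ⊆ (G.closedNeighborFinset v ∪ G.closedNeighborFinset w)ᶜ := by
      rw [compl_union]
      exact subset_inter hSv (mem_powersetCard.1 hSw).1
    have hle := card_le_card hsub
    rw [card_compl] at hle
    have := card_le_univ (G.closedNeighborFinset v ∪ G.closedNeighborFinset w)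
    have := hunion v w hvw
    omega
  have hpiece : ∀ v, #((G.closedNeighborFinset v)ᶜ.powersetCard i) =
      (Fintype.card V - (r + 1)).choose i := fun v => by
    rw [card_powersetCard, card_compl, card_closedNeighborFinset, hG.degree_eq]
  have htotal := card_filter_add_card_filter_not (s := univ.powersetCard i) (IsDomSet G)
  rw [hnon, card_biUnion hdisj, sum_congr rfl fun v _ => hpiece v, sum_const, card_univ,
    smul_eq_mul, card_powersetCard, card_univ] at htotal
  rw [domCount_eq_card_filter]
  omega

end SimpleGraph

open SimpleGraph

instance : DecidableRel petersen.Adj := fun a b =>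
  inferInstanceAs (Decidable (Disjoint a.1 b.1))

theorem card_petersen_vertices : Fintype.card {s : Finset (Fin 5) // s.card = 2} = 10 := by
  rw [Fintype.card_finset_len, Fintype.card_fin]
  rfl

theorem petersen_isRegularOfDegree_three : petersen.IsRegularOfDegree 3 := by
  intro v
  revert v
  decide

-- Adjacent vertices share two closed neighbours, non-adjacent ones exactly one.
theorem petersen_six_le_card_closedNeighborFinset_union {v w : {s : Finset (Fin 5) // s.card = 2}}
    (hvw : v ≠ w) : 6 ≤ #(petersen.closedNeighborFinset v ∪ petersen.closedNeighborFinset w) := by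
  revert v w
  decide

theorem petersen_domCount_three : domCount petersen 3 = 10 := by
  rw [domCount_eq_card_filter]
  decide

theorem petersen_domCount_four : domCount petersen 4 = 75 := by
  rw [domCount_eq_card_filter]
  decide

theorem petersen_domCount_of_le_two {i : ℕ} (hi : i ≤ 2) : domCount petersen i = 0 := by
  refine petersen.domCount_eq_zero ?_
  have hΔ : petersen.maxDegree ≤ 3 :=
    maxDegree_le_of_forall_degree_le _ _ fun v => (petersen_isRegularOfDegree_three.degree_eq v).le
  rw [card_petersen_vertices]
  nlinarith

theorem petersen_domCount_of_five_le {i : ℕ} (hi : 5 ≤ i) :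
    domCount petersen i = Nat.choose 10 i - 10 * Nat.choose 6 i := by
  rw [petersen.domCount_eq_choose_sub petersen_isRegularOfDegree_three, card_petersen_vertices]
  intro v w hvw
  have := petersen_six_le_card_closedNeighborFinset_union hvw
  rw [card_petersen_vertices]
  omega

theorem petersen_domination_polynomial :
    domCount petersen 3 = 10 ∧
    domCount petersen 4 = 75 ∧
    domCount petersen 5 = Nat.choose 10 5 - 60 ∧
    domCount petersen 6 = Nat.choose 10 6 - 10 ∧
    domCount petersen 7 = Nat.choose 10 7 ∧
    domCount petersen 8 = Nat.choose 10 8 ∧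
    domCount petersen 9 = Nat.choose 10 9 ∧
    domCount petersen 10 = 1 ∧
    ∀ i : ℕ, i ≤ 2 → domCount petersen i = 0 := by
  refine ⟨petersen_domCount_three, petersen_domCount_four, ?_, ?_, ?_, ?_, ?_, ?_,
    fun i => petersen_domCount_of_le_two⟩ <;>
  · rw [petersen_domCount_of_five_le (by norm_num)]
    decide
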